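/- arXiv:1407.2880 — 3 statements merged into one kernel-verified Lean document; each statement's English description precedes it below -/
import Mathlib

section
/- For n ≥ 1, the n-th power sum symmetric polynomial satisfies s_n = n · Σ_{(m_1,...,m_n): m_1+2m_2+...+nm_n = n} (-1)^{m_2+m_4+...} · (m_1+...+m_n-1)!/(m_1!···m_n!) · σ_1^{m_1}···σ_n^{m_n}, where σ_i are the elementary symmetric polynomials. -/
/-!
Newton's identities `p_k = (-1)^(k-1) k σ_k + ∑_{0<i<k} (-1)^(i-1) σ_i p_(k-i)` determine the
power sums recursively, so it suffices that `Q_k := ∑_m c(m) σ^m` (the claimed value of `p_k / k`)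
satisfies `k Q_k = (-1)^(k-1) k σ_k + ∑_{0<i≤k} (-1)^(i-1) (k-i) σ_i Q_(k-i)`. Expanding the right
side, the coefficient of `σ^m` for a partition `m` of `k` with at least two parts is
`∑_j (-1)^(j-1) (k-j) c(m - e_j)`; since `(-1)^(j-1) c(m - e_j) = m_j c(m) / (|m| - 1)`, it equals
`c(m) / (|m| - 1) · ∑_j (k-j) m_j = k c(m)`, because `∑_j j m_j = k`.
-/

open Finset MvPolynomial

theorem MvPolynomial.psum_add_one_eq (σ R : Type*) [Fintype σ] [CommRing R] (i : ℕ) :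
    psum σ R (i + 1) = (-1) ^ i * (i + 1) * esymm σ R (i + 1) +
      ∑ j ∈ range i, (-1) ^ j * esymm σ R (j + 1) * psum σ R (i - j) := by
  rw [psum_eq_mul_esymm_sub_sum σ R _ i.succ_pos, sum_filter,
    Nat.sum_antidiagonal_eq_sum_range_succ (fun a b =>
      if a ∈ Set.Ioo 0 (i + 1) then (-1) ^ a * esymm σ R a * psum σ R b else 0),
    sum_range_succ, sum_range_succ']
  have h : ∀ j ∈ range i, (if j + 1 ∈ Set.Ioo 0 (i + 1) then
      (-1) ^ (j + 1) * esymm σ R (j + 1) * psum σ R (i + 1 - (j + 1)) else 0) =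
      -((-1) ^ j * esymm σ R (j + 1) * psum σ R (i - j)) := fun j hj => by
    rw [if_pos (by simpa using mem_range.mp hj), pow_succ, Nat.add_sub_add_right]; ring
  rw [sum_congr rfl h]
  simp [pow_succ]

namespace GirardWaring

variable {n : ℕ}

-- `m j` is the multiplicity of the part `j + 1`.
def weight (m : Fin n → ℕ) : ℕ := ∑ j, (j.1 + 1) * m j

def size (m : Fin n → ℕ) : ℕ := ∑ j, m j

def partitions (n k : ℕ) : Finset (Fin n → ℕ) :=
  {m ∈ Fintype.piFinset fun _ => range (n + 1) | weight m = k}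

def waringCoeff (m : Fin n → ℕ) : ℚ :=
  (-1 : ℚ) ^ (∑ j ∈ univ.filter (fun j : Fin n => Even (j.1 + 1)), m j) *
    ((size m - 1).factorial : ℚ) / ∏ j, ((m j).factorial : ℚ)

@[simp]
lemma weight_add (m m' : Fin n → ℕ) : weight (m + m') = weight m + weight m' := by
  simp [weight, mul_add, sum_add_distrib]

@[simp]
lemma weight_single (j : Fin n) : weight (Pi.single j 1) = j + 1 := by
  simp [weight, Pi.single_apply]

@[simp]
lemma size_add (m m' : Fin n → ℕ) : size (m + m') = size m + size m' := by
  simp [size, sum_add_distrib]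

@[simp]
lemma size_single (j : Fin n) : size (Pi.single j 1) = 1 := by
  simp [size, Pi.single_apply]

lemma single_le_iff {m : Fin n → ℕ} {j : Fin n} : Pi.single j 1 ≤ m ↔ 0 < m j := by
  refine ⟨fun h => (by simpa using h j : 1 ≤ m j), fun h l => ?_⟩
  rcases eq_or_ne l j with rfl | hl <;> simp [*]; omega

lemma mul_le_weight (m : Fin n → ℕ) (j : Fin n) : (j + 1) * m j ≤ weight m :=
  single_le_sum (f := fun l : Fin n => (l + 1) * m l) (fun _ _ => Nat.zero_le _) (mem_univ j)

lemma mem_partitions {k : ℕ} (hk : k ≤ n) {m : Fin n → ℕ} :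
    m ∈ partitions n k ↔ weight m = k := by
  refine ⟨fun h => (mem_filter.mp h).2, fun h => mem_filter.mpr ⟨?_, h⟩⟩
  refine Fintype.mem_piFinset.mpr fun j => mem_range.mpr ?_
  have := mul_le_weight m j
  nlinarith

lemma eq_zero_of_size_eq_zero {m : Fin n → ℕ} (h : size m = 0) : m = 0 :=
  funext fun j => (sum_eq_zero_iff.mp h) j (mem_univ j)

lemma eq_single_of_size_eq_one {m : Fin n → ℕ} (h : size m = 1) : ∃ j, m = Pi.single j 1 := by
  obtain ⟨j, hj⟩ : ∃ j, 0 < m j := by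
    by_contra! h0
    simp [size, Nat.le_zero.mp (h0 _)] at h
  refine ⟨j, ?_⟩
  have hle := single_le_iff.mpr hj
  have h0 : m - Pi.single j 1 = 0 := by
    apply eq_zero_of_size_eq_zero
    have := size_add (m - Pi.single j 1) (Pi.single j 1)
    rw [tsub_add_cancel_of_le hle, h, size_single] at this
    omega
  rw [← tsub_add_cancel_of_le hle, h0, zero_add]

lemma neg_one_pow_sum_even_add_single (m : Fin n → ℕ) (j : Fin n) :
    (-1 : ℚ) ^ (∑ l ∈ univ.filter (fun l : Fin n => Even (l.1 + 1)),
      (m + Pi.single j 1 : Fin n → ℕ) l) =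
      (-1) ^ (j : ℕ) * (-1) ^ (∑ l ∈ univ.filter (fun l : Fin n => Even (l.1 + 1)), m l) := by
  simp only [Pi.add_apply, sum_add_distrib, pow_add, Pi.single_apply, sum_ite_eq', mem_filter,
    mem_univ, true_and, mul_comm ((-1 : ℚ) ^ (j : ℕ))]
  rcases Nat.even_or_odd (j : ℕ) with h | h
  · simp [h.neg_one_pow, Nat.even_add_one, h]
  · simp [h.neg_one_pow, Nat.even_add_one, Nat.not_even_iff_odd.mpr h]

lemma prod_factorial_add_single (m : Fin n → ℕ) (j : Fin n) :
    ∏ l, ((m + Pi.single j 1 : Fin n → ℕ) l).factorial = (m j + 1) * ∏ l, (m l).factorial := by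
  have h : ∀ l, ((m + Pi.single j 1 : Fin n → ℕ) l).factorial =
      (m l).factorial * if l = j then m j + 1 else 1 := by
    intro l
    rcases eq_or_ne l j with rfl | hl
    · simp [Nat.factorial_succ, mul_comm]
    · simp [hl]
  simp only [h, prod_mul_distrib, prod_ite_eq', mem_univ, if_true, mul_comm]

lemma waringCoeff_add_single {m : Fin n → ℕ} (hm : 0 < size m) (j : Fin n) :
    (m j + 1 : ℚ) * waringCoeff (m + Pi.single j 1) = (-1) ^ (j : ℕ) * size m * waringCoeff m := by
  have hfac : ((∏ l, ((m + Pi.single j 1 : Fin n → ℕ) l).factorial : ℕ) : ℚ) =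
      (m j + 1) * ∏ l, ((m l).factorial : ℚ) := by
    rw [prod_factorial_add_single]; push_cast; rfl
  have hsize : (size m : ℚ) * ((size m - 1).factorial : ℚ) = (size m).factorial := by
    exact_mod_cast Nat.mul_factorial_pred hm.ne'
  simp only [waringCoeff, neg_one_pow_sum_even_add_single, size_add, size_single,
    add_tsub_cancel_right]
  push_cast at hfac
  rw [hfac, ← hsize]
  have : (∏ l, ((m l).factorial : ℚ)) ≠ 0 := prod_ne_zero_iff.mpr fun l _ => by positivity
  field_simp

lemma neg_one_pow_mul_waringCoeff_sub_single {m : Fin n → ℕ} (hm : 1 < size m) {j : Fin n}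
    (hj : 0 < m j) :
    (-1) ^ (j : ℕ) * waringCoeff (m - Pi.single j 1) = m j * waringCoeff m / (size m - 1 : ℚ) := by
  set m' := m - Pi.single j 1
  have hm' : m = m' + Pi.single j 1 := (tsub_add_cancel_of_le (single_le_iff.mpr hj)).symm
  have hsize : (size m - 1 : ℚ) = size m' := by rw [hm', size_add, size_single]; push_cast; ring
  have hmj : (m j : ℚ) = m' j + 1 := by rw [hm']; simp
  have key := waringCoeff_add_single (m := m') (by rw [hm', size_add, size_single] at hm; omega) j
  rw [← hm'] at key
  have : (size m' : ℚ) ≠ 0 := by rw [← hsize]; exact sub_ne_zero.mpr (by exact_mod_cast hm.ne')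
  rw [hsize, hmj, key]
  field_simp

lemma sum_neg_one_pow_mul_waringCoeff_sub_single {m : Fin n → ℕ} (hm : 1 < size m) :
    ∑ j ∈ univ.filter (fun j => 0 < m j),
        (-1) ^ (j : ℕ) * ((weight m : ℚ) - (j + 1)) * waringCoeff (m - Pi.single j 1) =
      weight m * waringCoeff m := by
  have hs : (size m - 1 : ℚ) ≠ 0 := sub_ne_zero.mpr (by exact_mod_cast hm.ne')
  calc ∑ j ∈ univ.filter (fun j => 0 < m j),
        (-1) ^ (j : ℕ) * ((weight m : ℚ) - (j + 1)) * waringCoeff (m - Pi.single j 1)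
      = ∑ j ∈ univ.filter (fun j => 0 < m j),
          ((weight m : ℚ) - (j + 1)) * m j * (waringCoeff m / (size m - 1)) := by
        refine sum_congr rfl fun j hj => ?_
        rw [mul_right_comm, neg_one_pow_mul_waringCoeff_sub_single hm (mem_filter.mp hj).2]
        ring
    _ = ∑ j, ((weight m : ℚ) - (j + 1)) * m j * (waringCoeff m / (size m - 1)) :=
        sum_filter_of_ne fun j _ h => Nat.pos_of_ne_zero fun h0 => h (by simp [h0])
    _ = (weight m * size m - weight m) * (waringCoeff m / (size m - 1)) := by
        rw [← sum_mul]
        simp only [sub_mul, sum_sub_distrib, weight, size]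
        push_cast
        rw [mul_sum]
    _ = weight m * waringCoeff m := by field_simp

lemma waringCoeff_single (i : Fin n) :
    waringCoeff (Pi.single i 1 : Fin n → ℕ) = (-1) ^ (i : ℕ) := by
  have h := neg_one_pow_sum_even_add_single 0 i
  simp only [zero_add, Pi.zero_apply, sum_const_zero, pow_zero, mul_one] at h
  rw [waringCoeff, h]
  simp [size, Pi.single_apply, apply_ite Nat.factorial]

lemma prod_pow_add_single {M : Type*} [CommMonoid M] (e : Fin n → M) (m : Fin n → ℕ)
    (j : Fin n) : ∏ l, e l ^ (m + Pi.single j 1 : Fin n → ℕ) l = e j * ∏ l, e l ^ m l := by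
  simp only [Pi.add_apply, pow_add, prod_mul_distrib, Pi.single_apply, pow_ite, pow_one, pow_zero,
    prod_ite_eq', mem_univ, if_true, mul_comm]

lemma prod_pow_single {M : Type*} [CommMonoid M] (e : Fin n → M) (j : Fin n) :
    ∏ l, e l ^ (Pi.single j 1 : Fin n → ℕ) l = e j := by
  simpa using prod_pow_add_single e 0 j

lemma one_lt_size {m : Fin n → ℕ} {i : Fin n} (hm : weight m = i + 1)
    (hne : m ≠ Pi.single i 1) : 1 < size m := by
  by_contra! h
  interval_cases hs : size m
  · simp [eq_zero_of_size_eq_zero hs, weight] at hm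
  · obtain ⟨l, rfl⟩ := eq_single_of_size_eq_one hs
    rw [weight_single, add_left_inj] at hm
    exact hne (by rw [Fin.ext hm])

lemma sum_partitions_add_single {M : Type*} [AddCommMonoid M] {k : ℕ} (hk : k ≤ n)
    {j : Fin n} (hj : (j : ℕ) + 1 ≤ k) (g : (Fin n → ℕ) → M) :
    ∑ m ∈ partitions n (k - (j + 1)), g (m + Pi.single j 1) =
      ∑ m ∈ (partitions n k).filter (fun m => 0 < m j), g m := by
  refine sum_nbij' (· + Pi.single j 1) (· - Pi.single j 1) (fun m hm => ?_) (fun m hm => ?_)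
    (fun m _ => add_tsub_cancel_right m _) (fun m hm => ?_) (fun _ _ => rfl)
  · rw [mem_partitions (by omega)] at hm
    simp [mem_partitions hk, hm, hj]
  · rw [mem_filter, mem_partitions hk] at hm
    have h := weight_add (m - Pi.single j 1) (Pi.single j 1)
    rw [tsub_add_cancel_of_le (single_le_iff.mpr hm.2), hm.1, weight_single] at h
    rw [mem_partitions (by omega)]
    omega
  · exact tsub_add_cancel_of_le (single_le_iff.mpr (mem_filter.mp hm).2)

variable {A : Type*} [CommRing A] [Algebra ℚ A]

def girardWaringSum (e : Fin n → A) (k : ℕ) : A :=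
  ∑ m ∈ partitions n k, waringCoeff m • ∏ j, e j ^ m j

-- The recursion for `Q_k` of the header, with `k = i + 1` and parts indexed from `0`.
lemma smul_girardWaringSum_add_one (e : Fin n → A) (i : Fin n) :
    ((i : ℚ) + 1) • girardWaringSum e (i + 1) =
      ((-1) ^ (i : ℕ) * ((i : ℚ) + 1)) • e i +
        ∑ j ∈ Iic i, ((-1) ^ (j : ℕ) * ((i : ℚ) - j)) • (e j * girardWaringSum e (i - j)) := by
  set P := partitions n (i + 1)
  set S : (Fin n → ℕ) → ℚ := fun m => ∑ j ∈ univ.filter (fun j => 0 < m j),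
    (-1) ^ (j : ℕ) * ((i : ℚ) - j) * waringCoeff (m - Pi.single j 1)
  have hsingle : Pi.single i 1 ∈ P := (mem_partitions i.2).mpr (weight_single i)
  have hS_single : S (Pi.single i 1) = 0 := by
    refine sum_eq_zero fun j hj => ?_
    obtain rfl : j = i := by by_contra h; simp [Pi.single_apply, h] at hj
    simp
  have hS : ∀ m ∈ P.erase (Pi.single i 1), S m = ((i : ℚ) + 1) * waringCoeff m := by
    intro m hm
    obtain ⟨hne, hm⟩ := mem_erase.mp hm
    have hw := (mem_partitions i.2).mp hm
    have h := sum_neg_one_pow_mul_waringCoeff_sub_single (one_lt_size hw hne)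
    rw [hw] at h
    push_cast at h
    rw [← h]
    exact sum_congr rfl fun j _ => by ring
  have hrhs : ∑ j ∈ Iic i, ((-1) ^ (j : ℕ) * ((i : ℚ) - j)) • (e j * girardWaringSum e (i - j)) =
      ∑ m ∈ P, S m • ∏ l, e l ^ m l := by
    calc _ = ∑ j ∈ Iic i, ∑ m ∈ P.filter (fun m => 0 < m j),
          ((-1) ^ (j : ℕ) * ((i : ℚ) - j) * waringCoeff (m - Pi.single j 1)) • ∏ l, e l ^ m l := by
          refine sum_congr rfl fun j hj => ?_
          have hji : (j : ℕ) + 1 ≤ i + 1 := by simpa using mem_Iic.mp hj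
          rw [← sum_partitions_add_single (k := i + 1) i.2 hji, Nat.add_sub_add_right,
            girardWaringSum, mul_sum, smul_sum]
          refine sum_congr rfl fun m _ => ?_
          rw [prod_pow_add_single, add_tsub_cancel_right, mul_smul_comm, smul_smul]
      _ = ∑ m ∈ P, S m • ∏ l, e l ^ m l := by
          rw [sum_comm' (t' := P) (s' := fun m => univ.filter (fun j => 0 < m j))]
          · simp only [S, sum_smul]
          · intro j m
            simp only [mem_filter, mem_Iic, mem_univ, true_and]
            refine ⟨fun h => ⟨h.2.2, h.2.1⟩, fun ⟨hj, hm⟩ => ⟨?_, hm, hj⟩⟩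
            have := mul_le_weight m j
            rw [(mem_partitions i.2).mp hm] at this
            rw [Fin.le_iff_val_le_val]
            nlinarith
  rw [hrhs, ← add_sum_erase _ _ hsingle, hS_single, zero_smul, zero_add, girardWaringSum,
    smul_sum, ← add_sum_erase _ _ hsingle, waringCoeff_single, smul_smul, prod_pow_single, mul_comm]
  exact congrArg _ (sum_congr rfl fun m hm => by rw [hS m hm, smul_smul])

lemma sum_range_eq_sum_Iio {M : Type*} [AddCommMonoid M] (f : ℕ → M) (i : Fin n) :
    ∑ j ∈ range i, f j = ∑ j ∈ Iio i, f j := by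
  rw [← Nat.Iio_eq_range, ← Fin.map_valEmbedding_Iio, sum_map, Fin.valEmbedding_apply]

theorem psum_eq_smul_girardWaringSum {σ R : Type*} [Fintype σ] [CommRing R] [Algebra ℚ R]
    {k : ℕ} (hk : 1 ≤ k) (hkn : k ≤ n) :
    psum σ R k = (k : ℚ) • girardWaringSum (fun j : Fin n => esymm σ R (j + 1)) k := by
  induction k using Nat.strong_induction_on with
  | _ k ih =>
  obtain ⟨i, rfl⟩ : ∃ i : Fin n, (i : ℕ) + 1 = k := ⟨⟨k - 1, by omega⟩, by simp; omega⟩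
  set e : Fin n → MvPolynomial σ R := fun j => esymm σ R (j + 1)
  have hterm : ∀ j ∈ Iio i, (-1) ^ (j : ℕ) * e j * psum σ R (i - j) =
      ((-1) ^ (j : ℕ) * ((i : ℚ) - j)) • (e j * girardWaringSum e (i - j)) := by
    intro j hj
    have hji : j < i := mem_Iio.mp hj
    rw [ih (i - j) (by omega) (by omega) (by omega), Nat.cast_sub hji.le]
    simp only [Algebra.smul_def, map_mul, map_pow, map_neg, map_one, map_sub, map_natCast]
    ring
  calc psum σ R (i + 1)
      = (-1) ^ (i : ℕ) * (i + 1) * e i +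
          ∑ j ∈ Iio i, (-1) ^ (j : ℕ) * e j * psum σ R (i - j) := by
        rw [psum_add_one_eq, sum_range_eq_sum_Iio (fun j => (-1) ^ j * esymm σ R (j + 1) * _)]
    _ = ((-1) ^ (i : ℕ) * ((i : ℚ) + 1)) • e i +
          ∑ j ∈ Iic i, ((-1) ^ (j : ℕ) * ((i : ℚ) - j)) • (e j * girardWaringSum e (i - j)) := by
        rw [← Iio_insert, sum_insert notMem_Iio_self, sum_congr rfl hterm, sub_self, mul_zero,
          zero_smul, zero_add]
        simp only [Algebra.smul_def, map_mul, map_pow, map_neg, map_one, map_add, map_natCast]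
    _ = ((i + 1 : ℕ) : ℚ) • girardWaringSum e (i + 1) := by
        push_cast
        exact (smul_girardWaringSum_add_one e i).symm

end GirardWaring

theorem stmt3_general (N n : ℕ) (hn : 1 ≤ n) :
    MvPolynomial.psum (Fin N) ℚ n =
      (n : MvPolynomial (Fin N) ℚ) *
        ∑ m ∈ Finset.filter (fun m : Fin n → ℕ => ∑ j, (j.1 + 1) * m j = n)
            (Fintype.piFinset fun _ => Finset.range (n + 1)),
          MvPolynomial.C
              ((-1 : ℚ) ^ (∑ j ∈ Finset.univ.filter (fun j : Fin n => Even (j.1 + 1)), m j) *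
                (Nat.factorial (∑ j, m j - 1) : ℚ) / ∏ j, (Nat.factorial (m j) : ℚ)) *
            ∏ j : Fin n, (MvPolynomial.esymm (Fin N) ℚ (j.1 + 1)) ^ (m j) := by
  rw [GirardWaring.psum_eq_smul_girardWaringSum hn le_rfl, GirardWaring.girardWaringSum,
    Nat.cast_smul_eq_nsmul, nsmul_eq_mul]
  simp only [smul_eq_C_mul]
  rfl

/-- Newton-type formula: for `1 ≤ n ≤ N`, in `N` variables,
`s_n = n · ∑_{m_1+2m_2+...+n m_n = n} (-1)^{m_2+m_4+...} (m_1+...+m_n-1)!/(m_1!⋯m_n!)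
· σ_1^{m_1} ⋯ σ_n^{m_n}`. -/
theorem stmt3 (N n : ℕ) (hn : 1 ≤ n) (hN : n ≤ N) :
    MvPolynomial.psum (Fin N) ℚ n =
      (n : MvPolynomial (Fin N) ℚ) *
        ∑ m ∈ Finset.filter (fun m : Fin n → ℕ => ∑ j, (j.1 + 1) * m j = n)
            (Fintype.piFinset fun _ => Finset.range (n + 1)),
          MvPolynomial.C
              ((-1 : ℚ) ^ (∑ j ∈ Finset.univ.filter (fun j : Fin n => Even (j.1 + 1)), m j) *
                (Nat.factorial (∑ j, m j - 1) : ℚ) / ∏ j, (Nat.factorial (m j) : ℚ)) *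
            ∏ j : Fin n, (MvPolynomial.esymm (Fin N) ℚ (j.1 + 1)) ^ (m j) :=
  stmt3_general N n hn
end

section
/- Define d_5(n) by Π_{t≥1}(1-q^{5t})/(1-q^t) = Σ_{n≥0} d_5(n) q^n. Then d_5(5n+4) ≡ 0 (mod 5) for all n ≥ 0. -/
/-!
Modulo 5, `∏ (1 - q^(5t)) ≡ E^5` with `E = ∏ (1 - q^t)`, so `d_5(N) ≡ [q^N] E · E^3`.
By Euler's pentagonal number theorem `E` is supported on the pentagonal numbers `k(3k-1)/2`, and
by a finite form of Jacobi's identity the coefficient of `q^b` in `E^3` is `∑ (-1)^j (n + j)`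
over the `j` with `j(j+1)/2 = b`, for any `n > b`. When `k(3k-1)/2 + j(j+1)/2 = 5m + 4` we get
`(6k-1)^2 + 3(2j+1)^2 ≡ 0 (mod 5)`, hence `5 ∣ 2j + 1`, and choosing `n ≡ 3 (mod 5)` makes
every weight `n + j` divisible by 5.

The finite Jacobi identity comes from differentiating, at `z = 1`, the finite triple product
`∏_{k<n} (1 - z q^(k+1)) (q^k - z) = ∑_i (-1)^i [2n, i]_q q^((i-n)(i-n+1)/2) z^i`, and then
multiplying by `∏_{k<n} (1 - q^(k+1))`, which turns each Gaussian binomial into `1` modulo a high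
power of `q`.
-/

open Finset

def triangle (j : ℤ) : ℕ := (j * (j + 1) / 2).toNat

theorem two_mul_natCast_triangle (j : ℤ) : 2 * (triangle j : ℤ) = j * (j + 1) := by
  have : 2 ∣ j * (j + 1) := (Int.even_mul_succ_self j).two_dvd
  have hj : 0 ≤ j * (j + 1) := by rcases le_or_gt 0 j with h | h <;> nlinarith
  rw [triangle, Int.toNat_of_nonneg (Int.ediv_nonneg hj (by norm_num)), Int.mul_ediv_cancel' this]

@[simp]
theorem triangle_zero : triangle 0 = 0 := rfl

theorem add_triangle_natCast_sub (i b : ℕ) :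
    b + triangle (i - b) = i + triangle (i - (b + 1 : ℕ)) := by
  have h₁ := two_mul_natCast_triangle (i - b)
  have h₂ := two_mul_natCast_triangle (i - (b + 1 : ℕ))
  push_cast at h₂
  have : 2 * ((b : ℤ) + triangle (i - b)) = 2 * (i + triangle (i - (b + 1 : ℕ))) := by
    push_cast; linear_combination h₁ - h₂
  omega

theorem triangle_natCast_succ_sub_succ (i b : ℕ) :
    triangle ((i + 1 : ℕ) - (b + 1 : ℕ)) = triangle (i - b) := by
  congr 1; push_cast; ring

theorem le_triangle (j : ℤ) : j ≤ triangle j := by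
  nlinarith [two_mul_natCast_triangle j, sq_nonneg (j - 1)]

theorem neg_le_triangle_add_one (j : ℤ) : -j ≤ triangle j + 1 := by
  nlinarith [two_mul_natCast_triangle j, sq_nonneg (j + 1)]

section GaussBinomial

variable {R : Type*} [CommRing R] (q : R)

-- The exponent `m - j` truncates only when `j > m`, and then `gaussBinomial m j = 0`.
def gaussBinomial : ℕ → ℕ → R
  | _, 0 => 1
  | 0, _ + 1 => 0
  | m + 1, j + 1 => q ^ (m - j) * gaussBinomial m j + gaussBinomial m (j + 1)

@[simp]
theorem gaussBinomial_zero_right (m : ℕ) : gaussBinomial q m 0 = 1 := by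
  cases m <;> rfl

@[simp]
theorem gaussBinomial_zero_succ (j : ℕ) : gaussBinomial q 0 (j + 1) = 0 := rfl

theorem gaussBinomial_succ_succ (m j : ℕ) :
    gaussBinomial q (m + 1) (j + 1) =
      q ^ (m - j) * gaussBinomial q m j + gaussBinomial q m (j + 1) :=
  rfl

theorem gaussBinomial_eq_zero_of_lt {m j : ℕ} (h : m < j) : gaussBinomial q m j = 0 := by
  induction m generalizing j with
  | zero => cases j with
    | zero => omega
    | succ j => rfl
  | succ m ih =>
    cases j with
    | zero => omega
    | succ j => rw [gaussBinomial_succ_succ, ih (by omega), ih (by omega), mul_zero, add_zero]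

@[simp]
theorem gaussBinomial_self (m : ℕ) : gaussBinomial q m m = 1 := by
  induction m with
  | zero => rfl
  | succ m ih => rw [gaussBinomial_succ_succ, ih, gaussBinomial_eq_zero_of_lt q (by omega)]; simp

theorem gaussBinomial_succ_succ' (m j : ℕ) :
    gaussBinomial q (m + 1) (j + 1) =
      gaussBinomial q m j + q ^ (j + 1) * gaussBinomial q m (j + 1) := by
  induction m generalizing j with
  | zero => cases j <;> simp [gaussBinomial_succ_succ]
  | succ m ih =>
    cases j with
    | zero =>
      have h₁ := gaussBinomial_succ_succ q m 0
      have h₂ := gaussBinomial_succ_succ q (m + 1) 0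
      have h₃ := ih 0
      simp only [gaussBinomial_zero_right, mul_one, zero_add, pow_one, Nat.sub_zero]
        at h₁ h₂ h₃ ⊢
      linear_combination h₂ + h₃ - q * h₁
    | succ j =>
      conv_lhs => rw [gaussBinomial_succ_succ, ih, ih]
      conv_rhs => rw [gaussBinomial_succ_succ q m j, gaussBinomial_succ_succ q m (j + 1)]
      rw [Nat.add_sub_add_right]
      rcases lt_or_ge m (j + 1) with hm | hm
      · rw [gaussBinomial_eq_zero_of_lt q hm]; ring
      · have : q ^ (m - j) * q ^ (j + 1) = q ^ (j + 1 + 1) * q ^ (m - (j + 1)) := by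
          rw [← pow_add, ← pow_add]; congr 1; omega
        linear_combination gaussBinomial q m (j + 1) * this

theorem gaussBinomial_symm {m j : ℕ} (h : j ≤ m) :
    gaussBinomial q m (m - j) = gaussBinomial q m j := by
  induction m generalizing j with
  | zero => rw [Nat.le_zero.mp h]
  | succ m ih =>
    rcases j with _ | j
    · simp
    by_cases hj : j = m
    · subst hj; simp
    obtain ⟨k, hk⟩ : ∃ k, m - j = k + 1 := ⟨m - j - 1, by omega⟩
    rw [Nat.add_sub_add_right, hk, gaussBinomial_succ_succ', gaussBinomial_succ_succ,
      ← hk, show k = m - (j + 1) by omega, ih (by omega), ih (by omega)]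
    ring

theorem one_sub_pow_mul_gaussBinomial_succ (m j : ℕ) :
    (1 - q ^ (j + 1)) * gaussBinomial q m (j + 1) = (1 - q ^ (m - j)) * gaussBinomial q m j := by
  linear_combination gaussBinomial_succ_succ' q m j - gaussBinomial_succ_succ q m j

theorem prod_one_sub_pow_mul_gaussBinomial (m k : ℕ) :
    (∏ i ∈ range k, (1 - q ^ (i + 1))) * gaussBinomial q m k =
      ∏ i ∈ range k, (1 - q ^ (m - i)) := by
  induction k with
  | zero => simp
  | succ k ih =>
    rw [prod_range_succ, prod_range_succ, mul_assoc, one_sub_pow_mul_gaussBinomial_succ, ← ih]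
    ring

theorem one_sub_pow_smodEq_one {e k : ℕ} (h : e ≤ k) :
    1 - q ^ k ≡ 1 [SMOD Ideal.span {q ^ e}] := by
  rw [SModEq.sub_mem, sub_sub_cancel_left, Ideal.neg_mem_iff, Ideal.mem_span_singleton]
  exact pow_dvd_pow q h

theorem prod_one_sub_pow_smodEq_one {ι : Type*} {s : Finset ι} {f : ι → ℕ} {e : ℕ}
    (h : ∀ i ∈ s, e ≤ f i) : ∏ i ∈ s, (1 - q ^ f i) ≡ 1 [SMOD Ideal.span {q ^ e}] := by
  simpa using SModEq.prod fun i hi ↦ one_sub_pow_smodEq_one q (h i hi)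

theorem prod_one_sub_pow_smodEq_of_range_subset {s : Finset ℕ} {M : ℕ} (h : range M ⊆ s) :
    ∏ k ∈ s, (1 - q ^ (k + 1)) ≡
      ∏ k ∈ range M, (1 - q ^ (k + 1)) [SMOD Ideal.span {q ^ (M + 1)}] := by
  rw [← prod_sdiff h]
  have : ∏ k ∈ s \ range M, (1 - q ^ (k + 1)) ≡ 1 [SMOD Ideal.span {q ^ (M + 1)}] :=
    prod_one_sub_pow_smodEq_one q fun k hk ↦ by simp only [mem_sdiff, mem_range] at hk; omega
  simpa using this.mul SModEq.rfl

theorem gaussBinomial_mul_prod_smodEq_one {m n k : ℕ} (hkn : k ≤ n) (hkm : 2 * k ≤ m) :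
    gaussBinomial q m k * ∏ i ∈ range n, (1 - q ^ (i + 1)) ≡
      1 [SMOD Ideal.span {q ^ (k + 1)}] := by
  rw [← prod_range_mul_prod_Ico _ hkn, ← mul_assoc, mul_comm (gaussBinomial q m k),
    prod_one_sub_pow_mul_gaussBinomial]
  have h₁ : ∏ i ∈ range k, (1 - q ^ (m - i)) ≡ 1 [SMOD Ideal.span {q ^ (k + 1)}] :=
    prod_one_sub_pow_smodEq_one q fun i hi ↦ by simp only [mem_range] at hi; omega
  have h₂ : ∏ i ∈ Ico k n, (1 - q ^ (i + 1)) ≡ 1 [SMOD Ideal.span {q ^ (k + 1)}] :=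
    prod_one_sub_pow_smodEq_one q fun i hi ↦ by simp only [mem_Ico] at hi; omega
  simpa using h₁.mul h₂

theorem gaussBinomial_two_mul_mul_prod_smodEq_one {n k : ℕ} (hk : k ≤ 2 * n) :
    gaussBinomial q (2 * n) k * ∏ i ∈ range n, (1 - q ^ (i + 1)) ≡
      1 [SMOD Ideal.span {q ^ (min k (2 * n - k) + 1)}] := by
  rcases le_total k n with h | h
  · rw [min_eq_left (by omega)]
    exact gaussBinomial_mul_prod_smodEq_one q h (by omega)
  · rw [min_eq_right (by omega), ← gaussBinomial_symm q hk]
    exact gaussBinomial_mul_prod_smodEq_one q (by omega) (by omega)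

section TripleProduct

open Polynomial

theorem coeff_mul_C_sub_C_mul_X_succ (p : R[X]) (u v : R) (i : ℕ) :
    (p * (C u - C v * X)).coeff (i + 1) = u * p.coeff (i + 1) - v * p.coeff i := by
  simp only [mul_sub, coeff_sub, coeff_mul_C, ← mul_assoc, coeff_mul_X]
  ring

theorem coeff_mul_C_sub_C_mul_X_zero (p : R[X]) (u v : R) :
    (p * (C u - C v * X)).coeff 0 = u * p.coeff 0 := by
  rw [mul_sub, coeff_sub, coeff_mul_C, ← mul_assoc, coeff_mul_X_zero, sub_zero, mul_comm]

theorem coeff_prod_C_pow_sub_X (b i : ℕ) :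
    (∏ k ∈ range b, (C (q ^ k) - X)).coeff i =
      (-1) ^ i * gaussBinomial q b i * q ^ triangle (i - b) := by
  induction b generalizing i with
  | zero => cases i <;> simp [coeff_one]
  | succ b ih =>
    have hX : (C (q ^ b) - X : R[X]) = C (q ^ b) - C 1 * X := by simp
    rw [prod_range_succ, hX]
    cases i with
    | zero =>
      rw [coeff_mul_C_sub_C_mul_X_zero, ih, ← zero_add (triangle (_ - (b + 1 : ℕ))),
        ← add_triangle_natCast_sub]
      simp [pow_add]
    | succ i =>
      rw [coeff_mul_C_sub_C_mul_X_succ, ih, ih, gaussBinomial_succ_succ',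
        triangle_natCast_succ_sub_succ, ← triangle_natCast_succ_sub_succ i b]
      have := congrArg (q ^ ·) (add_triangle_natCast_sub (i + 1) b)
      simp only [pow_add] at this
      linear_combination (-1) ^ (i + 1) * gaussBinomial q b (i + 1) * this

/-- A finite form of the Jacobi triple product. -/
theorem coeff_prod_one_sub_mul_prod_sub (a b i : ℕ) :
    ((∏ k ∈ range a, (1 - C (q ^ (k + 1)) * X)) * ∏ k ∈ range b, (C (q ^ k) - X)).coeff i =
      (-1) ^ i * gaussBinomial q (a + b) i * q ^ triangle (i - b) := by
  induction a generalizing i with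
  | zero => simpa using coeff_prod_C_pow_sub_X q b i
  | succ a ih =>
    have hX : (1 - C (q ^ (a + 1)) * X : R[X]) = C 1 - C (q ^ (a + 1)) * X := by simp
    rw [prod_range_succ, mul_right_comm, hX, Nat.add_right_comm]
    cases i with
    | zero => rw [coeff_mul_C_sub_C_mul_X_zero, ih]; simp
    | succ i =>
      rw [coeff_mul_C_sub_C_mul_X_succ, ih, ih, gaussBinomial_succ_succ]
      rcases lt_or_ge (a + b) i with hi | hi
      · rw [gaussBinomial_eq_zero_of_lt q hi]; ring
      have h₁ := add_triangle_natCast_sub (i + 1) b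
      rw [triangle_natCast_succ_sub_succ] at h₁
      have : q ^ (a + 1) * q ^ triangle (i - b) =
          q ^ (a + b - i) * q ^ triangle ((i + 1 : ℕ) - b) := by
        rw [← pow_add, ← pow_add]; congr 1; omega
      linear_combination (-1) ^ (i + 1) * gaussBinomial q (a + b) i * this

theorem prod_mul_prod_eq_sum_gaussBinomial (n : ℕ) :
    (∏ k ∈ range (n + 1), (1 - q ^ (k + 1))) * ∏ k ∈ range n, (1 - q ^ (k + 1)) =
      ∑ i ∈ range (2 * (n + 1) + 1),
        (-1) ^ (n + 1 + i) * (i : R) * gaussBinomial q (2 * (n + 1)) i *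
          q ^ triangle (i - (n + 1 : ℕ)) := by
  set P : R[X] := (∏ k ∈ range (n + 1), (1 - C (q ^ (k + 1)) * X)) *
    ∏ k ∈ range (n + 1), (C (q ^ k) - X) with hP
  have hcoeff (i : ℕ) : P.coeff i =
      (-1) ^ i * gaussBinomial q (2 * (n + 1)) i * q ^ triangle (i - (n + 1 : ℕ)) := by
    rw [hP, coeff_prod_one_sub_mul_prod_sub, two_mul]
  have hdeg : P.natDegree < 2 * (n + 1) + 1 := by
    refine Nat.lt_succ_of_le (natDegree_le_iff_coeff_eq_zero.mpr fun i hi ↦ ?_)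
    rw [hcoeff, gaussBinomial_eq_zero_of_lt q hi]; ring
  have hsum : (derivative P).eval 1 = ∑ i ∈ range (2 * (n + 1) + 1), P.coeff i * i := by
    conv_lhs => rw [as_sum_range' P _ hdeg]
    simp [derivative_monomial, eval_finsetSum]
  have hprod : (derivative P).eval 1 =
      -((∏ k ∈ range (n + 1), (1 - q ^ (k + 1))) * ∏ k ∈ range n, (q ^ (k + 1) - 1)) := by
    have : ∏ k ∈ range (n + 1), (C (q ^ k) - X) =
        (∏ k ∈ range n, (C (q ^ (k + 1)) - X)) * (1 - X) := by
      rw [prod_range_succ']; simp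
    rw [hP, this, ← mul_assoc, derivative_mul, eval_add, eval_mul, eval_mul]
    simp [eval_prod]
  have hneg : ∏ k ∈ range n, (q ^ (k + 1) - 1) =
      (-1) ^ n * ∏ k ∈ range n, (1 - q ^ (k + 1)) := by
    simp_rw [← neg_sub (1 : R), prod_neg, card_range]
  have hsq : ((-1 : R) ^ (n + 1)) ^ 2 = 1 := by
    rw [← pow_mul, mul_comm, pow_mul, neg_one_sq, one_pow]
  calc _ = (-1) ^ (n + 1) * (derivative P).eval 1 := by
        rw [hprod, hneg]; linear_combination (-(∏ k ∈ range (n + 1), (1 - q ^ (k + 1))) *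
          ∏ k ∈ range n, (1 - q ^ (k + 1))) * hsq
    _ = _ := by
      rw [hsum, mul_sum]
      exact sum_congr rfl fun i _ ↦ by rw [hcoeff, pow_add]; ring

end TripleProduct

end GaussBinomial

namespace PowerSeries

variable {R : Type*} [CommRing R]

theorem coeff_eq_of_smodEq {f g : R⟦X⟧} {e d : ℕ} (h : f ≡ g [SMOD Ideal.span {X ^ e}])
    (hd : d < e) : coeff d f = coeff d g := by
  rw [SModEq.sub_mem, Ideal.mem_span_singleton, X_pow_dvd_iff] at h
  simpa [sub_eq_zero] using h d hd

theorem coeff_X_pow_mul_of_smodEq_one {f : R⟦X⟧} {e t d : ℕ}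
    (h : f ≡ 1 [SMOD Ideal.span {X ^ e}]) (hd : d < t + e) :
    coeff d (X ^ t * f) = if t = d then 1 else 0 := by
  rw [coeff_X_pow_mul']
  split_ifs
  · rw [coeff_eq_of_smodEq h (by omega), coeff_one, if_pos (by omega)]
  · rw [coeff_eq_of_smodEq h (by omega), coeff_one, if_neg (by omega)]
  · omega
  · rfl

theorem coeff_prod_range_one_sub_X_pow {d M : ℕ} (hd : d ≤ M) :
    coeff d (∏ k ∈ range M, (1 - X ^ (k + 1) : R⟦X⟧)) = coeff d (pentagonalSeries R) := by
  obtain ⟨s, hs⟩ := Filter.eventually_atTop.mp (coeff_prod_one_sub_X_pow_eventually_eq R d)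
  rw [← hs (s ∪ range M) subset_union_left]
  have := prod_one_sub_pow_smodEq_of_range_subset (X : R⟦X⟧)
    (subset_union_right (s₁ := s) (s₂ := range M))
  exact (coeff_eq_of_smodEq this (by omega)).symm

theorem coeff_prod_range_one_sub_X_pow_pow_three {d n M : ℕ} (hn : d < n) (hM : d ≤ M) :
    coeff d ((∏ k ∈ range M, (1 - X ^ (k + 1) : R⟦X⟧)) ^ 3) =
      ∑ i ∈ range (2 * n + 1),
        if triangle (i - n) = d then (-1) ^ (n + i) * (i : R) else 0 := by
  obtain ⟨n, rfl⟩ : ∃ n', n = n' + 1 := ⟨n - 1, by omega⟩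
  set E : ℕ → R⟦X⟧ := fun m ↦ ∏ k ∈ range m, (1 - X ^ (k + 1))
  have hstab {m : ℕ} (hm : d ≤ m) : E m ≡ E d [SMOD Ideal.span {X ^ (d + 1)}] :=
    prod_one_sub_pow_smodEq_of_range_subset X (range_subset_range.mpr hm)
  have hcube : E M ^ 3 ≡ E (n + 1) * (E (n + 1) * E n) [SMOD Ideal.span {X ^ (d + 1)}] := by
    rw [pow_three]
    exact ((hstab hM).mul ((hstab hM).mul (hstab hM))).trans
      ((hstab (by omega)).mul ((hstab (by omega)).mul (hstab (by omega)))).symm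
  have hexp : E (n + 1) * (E (n + 1) * E n) = ∑ i ∈ range (2 * (n + 1) + 1),
      C ((-1 : R) ^ (n + 1 + i) * i) * (X ^ triangle (i - (n + 1 : ℕ)) *
        (gaussBinomial X (2 * (n + 1)) i * E (n + 1))) := by
    rw [prod_mul_prod_eq_sum_gaussBinomial, mul_sum]
    refine sum_congr rfl fun i _ ↦ ?_
    simp only [map_mul, map_pow, map_neg, map_one, map_natCast]
    ring
  rw [coeff_eq_of_smodEq hcube (lt_add_one d), hexp, map_sum]
  refine sum_congr rfl fun i hi ↦ ?_
  have hi : i ≤ 2 * (n + 1) := by simp only [mem_range] at hi; omega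
  have hg : gaussBinomial X (2 * (n + 1)) i * E (n + 1) ≡ 1
      [SMOD Ideal.span {X ^ (min i (2 * (n + 1) - i) + 1)}] :=
    gaussBinomial_two_mul_mul_prod_smodEq_one (X : R⟦X⟧) hi
  have hlt : d < triangle (i - (n + 1 : ℕ)) + (min i (2 * (n + 1) - i) + 1) := by
    have := le_triangle (i - (n + 1 : ℕ))
    have := neg_le_triangle_add_one (i - (n + 1 : ℕ))
    omega
  rw [coeff_C_mul, coeff_X_pow_mul_of_smodEq_one hg hlt, mul_ite, mul_one, mul_zero]

theorem coeff_prod_one_sub_X_pow_mul_invOfUnit_modEq (p : ℕ) [hp : Fact p.Prime] (M N : ℕ) :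
    coeff N ((∏ k ∈ range M, (1 - X ^ (p * (k + 1)) : ℤ⟦X⟧)) *
        invOfUnit (∏ k ∈ range M, (1 - X ^ (k + 1))) 1) ≡
      coeff N ((∏ k ∈ range M, (1 - X ^ (k + 1) : ℤ⟦X⟧)) ^ (p - 1)) [ZMOD p] := by
  have : CharP (ZMod p)⟦X⟧ p := charP_of_injective_ringHom C_injective p
  set B : ℤ⟦X⟧ := ∏ k ∈ range M, (1 - X ^ (k + 1))
  set φ := map (Int.castRingHom (ZMod p))
  have hB : B * invOfUnit B 1 = 1 := mul_invOfUnit B 1 (by simp [B, map_prod])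
  have hpow : B ^ p * invOfUnit B 1 = B ^ (p - 1) := by
    rw [← Nat.sub_add_cancel hp.out.one_le, pow_succ, mul_assoc, hB, mul_one, Nat.add_sub_cancel]
  have hA : φ (∏ k ∈ range M, (1 - X ^ (p * (k + 1)))) = φ B ^ p := by
    simp only [B, map_prod, ← prod_pow, map_sub, map_one, map_pow, sub_pow_char, one_pow,
      pow_mul']
  have hφ : φ ((∏ k ∈ range M, (1 - X ^ (p * (k + 1)))) * invOfUnit B 1) =
      φ (B ^ (p - 1)) := by
    rw [map_mul, hA, ← map_pow, ← map_mul, hpow]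
  rw [← ZMod.intCast_eq_intCast_iff]
  simpa only [φ, coeff_map, eq_intCast] using congrArg (coeff N) hφ

end PowerSeries

theorem five_dvd_two_mul_add_one_of_pentagonal_add_triangle {k j : ℤ} {m : ℕ}
    (h : pentagonal k + triangle j = 5 * m + 4) : (5 : ℤ) ∣ 2 * j + 1 := by
  have key : (6 * k - 1) ^ 2 + 3 * (2 * j + 1) ^ 2 = 5 * (24 * m + 20) := by
    have := congrArg (Nat.cast : ℕ → ℤ) h
    push_cast at this
    linear_combination
      -12 * two_mul_natCast_pentagonal k - 12 * two_mul_natCast_triangle j + 24 * this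
  have h5 : ((6 * k - 1 : ℤ) : ZMod 5) ^ 2 + 3 * ((2 * j + 1 : ℤ) : ZMod 5) ^ 2 = 0 := by
    exact_mod_cast (ZMod.intCast_zmod_eq_zero_iff_dvd _ 5).mpr ⟨_, key⟩
  have hsq : ∀ x y : ZMod 5, x ^ 2 + 3 * y ^ 2 = 0 → y = 0 := by decide
  exact (ZMod.intCast_zmod_eq_zero_iff_dvd _ 5).mp (hsq _ _ h5)

namespace PowerSeries

/-- As `n = 5m + 8 ≡ 3 (mod 5)`, each weight `i = n + j` with `5 ∣ 2j + 1` is divisible by 5. -/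
theorem five_dvd_coeff_prod_pow_three {k : ℤ} {b m M : ℕ} (h : pentagonal k + b = 5 * m + 4)
    (hb : b ≤ M) :
    (5 : ℤ) ∣ coeff b ((∏ i ∈ range M, (1 - X ^ (i + 1) : ℤ⟦X⟧)) ^ 3) := by
  rw [coeff_prod_range_one_sub_X_pow_pow_three (n := 5 * m + 8) (by omega) hb]
  refine dvd_sum fun i _ ↦ ?_
  split_ifs with ht
  · have := five_dvd_two_mul_add_one_of_pentagonal_add_triangle (ht ▸ h)
    exact dvd_mul_of_dvd_right (by omega) _
  · exact dvd_zero _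

theorem five_dvd_coeff_prod_pow_four {m M : ℕ} (hM : 5 * m + 4 ≤ M) :
    (5 : ℤ) ∣ coeff (5 * m + 4) ((∏ i ∈ range M, (1 - X ^ (i + 1) : ℤ⟦X⟧)) ^ 4) := by
  rw [pow_succ', coeff_mul]
  refine dvd_sum fun ⟨a, b⟩ hab ↦ ?_
  rw [HasAntidiagonal.mem_antidiagonal] at hab
  dsimp only at hab ⊢
  rw [coeff_prod_range_one_sub_X_pow (by omega : a ≤ M)]
  by_cases ha : a ∈ Set.range pentagonal
  · obtain ⟨k, rfl⟩ := ha
    exact dvd_mul_of_dvd_right (five_dvd_coeff_prod_pow_three hab (by omega)) _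
  · rw [coeff_pentagonalSeries_eq_zero _ ha, zero_mul]
    exact dvd_zero _

end PowerSeries

open PowerSeries in
/-- With `d` the coefficients of `∏_{t≥1}(1-q^{5 t})/(1-q^t)` (each coefficient computed
from sufficiently long truncations in `ℤ⟦X⟧`), we have `d(5 n + 4) ≡ 0 (mod 5)`. -/
theorem stmt8 (d : ℕ → ℤ)
    (hd : ∀ N : ℕ, d N =
      PowerSeries.coeff N
        ((∏ t ∈ Finset.Icc 1 N, (1 - (PowerSeries.X : PowerSeries ℤ) ^ (5 * t))) *
          PowerSeries.invOfUnit
            (∏ t ∈ Finset.Icc 1 N, (1 - (PowerSeries.X : PowerSeries ℤ) ^ t)) 1)) :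
    ∀ n : ℕ, (5 : ℤ) ∣ d (5 * n + 4) := by
  intro n
  have hIcc (f : ℕ → ℤ⟦X⟧) :
      ∏ t ∈ Icc 1 (5 * n + 4), f t = ∏ k ∈ range (5 * n + 4), f (k + 1) := by
    rw [range_eq_Ico, prod_Ico_add' f 0 _ 1, zero_add, Ico_add_one_right_eq_Icc]
  have : Fact (Nat.Prime 5) := ⟨Nat.prime_five⟩
  have hmod := coeff_prod_one_sub_X_pow_mul_invOfUnit_modEq 5 (5 * n + 4) (5 * n + 4)
  rw [hd, hIcc, hIcc]
  simpa only [Nat.cast_ofNat, Nat.reduceSub, sub_add_cancel] using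
    dvd_add hmod.symm.dvd (five_dvd_coeff_prod_pow_four (m := n) le_rfl)
end

section
/- Define d_5(n) by Π_{t≥1}(1-q^{5t})/(1-q^t) = Σ_{n≥0} d_5(n) q^n. Then d_5(121n+9) ≡ 0 (mod 5) for all n ≥ 0. -/
/-!
Modulo `5` we have `∏ (1 - q^{5t}) ≡ ∏ (1 - q^t)^5`, so `d(n) ≡ [qⁿ] (q;q)⁴ = [qⁿ] (q;q)·(q;q)³`.
By Euler's pentagonal number theorem the coefficients of `(q;q)` are supported on the pentagonal
numbers `j(3j-1)/2`, and by Jacobi's identity those of `(q;q)³` on the triangular numbers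
`k(k+1)/2`. The latter comes from differentiating at `z = 1` the finite triple product
`∏_{j<m} (1 - z q^{j+1})(z - q^j) = ∑_i (-1)^{i+m} [2m, i]_q q^{T(i-m)} zⁱ`; all products are
truncated, and identities are read modulo a power of `q` large enough for the coefficient at hand.
Finally `121n + 9 = j(3j-1)/2 + k(k+1)/2` would give `(6j-1)² + 3(2k+1)² = 11(264n + 20)`; as
`-3` is not a square modulo `11`, both `6j-1` and `2k+1` would be divisible by `11`, so `121`
would divide `11(264n + 20)`, which it does not.
-/

open Finset PowerSeries

namespace QSeries

theorem coeff_eq_of_X_pow_dvd_sub {R : Type*} [CommRing R] {φ ψ : R⟦X⟧} {n : ℕ}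
    (h : X ^ (n + 1) ∣ φ - ψ) : coeff n φ = coeff n ψ := by
  rw [← sub_eq_zero, ← map_sub]
  exact X_pow_dvd_iff.mp h n n.lt_succ_self

theorem X_pow_dvd_prod_one_sub_X_pow_sub_one {R : Type*} [CommRing R] {c : ℕ} {s : Finset ℕ}
    (h : ∀ j ∈ s, c ≤ j) : (X : R⟦X⟧) ^ c ∣ ∏ j ∈ s, (1 - X ^ j) - 1 := by
  refine prod_induction _ (fun φ => X ^ c ∣ φ - 1)
    (fun φ ψ hφ hψ => by simpa using dvd_mul_sub_mul hφ hψ) (by simp) fun j hj => ?_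
  rw [sub_sub_cancel_left, dvd_neg]
  exact pow_dvd_pow _ (h j hj)

theorem prod_Ioc_eq_mul_prod_Ioc {M : Type*} [CommMonoid M] (f : ℕ → M) {a b : ℕ}
    (h : a < b) : ∏ j ∈ Ioc a b, f j = f (a + 1) * ∏ j ∈ Ioc (a + 1) b, f j := by
  rw [← Icc_add_one_left_eq_Ioc, mul_prod_Ioc_eq_prod_Icc h]

def triangle (k : ℤ) : ℕ := (k * (k + 1) / 2).toNat

theorem two_mul_natCast_triangle (k : ℤ) : 2 * (triangle k : ℤ) = k * (k + 1) := by
  have hnn : 0 ≤ k * (k + 1) := by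
    rcases le_or_gt 0 k with h | h
    · positivity
    · nlinarith
  rw [triangle, Int.toNat_of_nonneg (Int.ediv_nonneg hnn zero_le_two),
    Int.mul_ediv_cancel' (Int.two_dvd_mul_add_one k)]

theorem natCast_triangle_add_one (k : ℤ) : (triangle (k + 1) : ℤ) = triangle k + k + 1 := by
  linarith [two_mul_natCast_triangle k, two_mul_natCast_triangle (k + 1)]

noncomputable def qPochhammer (n : ℕ) : ℤ⟦X⟧ := ∏ j ∈ Icc 1 n, (1 - X ^ j)

theorem qPochhammer_mul_prod_Ioc {a b : ℕ} (h : a ≤ b) :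
    qPochhammer a * ∏ j ∈ Ioc a b, (1 - X ^ j) = qPochhammer b := by
  have hIcc : ∀ n : ℕ, Icc 1 n = Ioc 0 n := fun n => Icc_add_one_left_eq_Ioc 0 n
  rw [qPochhammer, qPochhammer, hIcc, hIcc, prod_Ioc_consecutive _ (Nat.zero_le a) h]

theorem qPochhammer_succ (n : ℕ) : qPochhammer (n + 1) = qPochhammer n * (1 - X ^ (n + 1)) :=
  prod_Icc_succ_top (by omega) _

theorem prod_range_one_sub_X_pow_succ (n : ℕ) :
    ∏ i ∈ range n, (1 - X ^ (i + 1)) = qPochhammer n := by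
  induction n with
  | zero => rfl
  | succ n ih => rw [prod_range_succ, ih, qPochhammer_succ]

theorem X_pow_succ_dvd_qPochhammer_sub {n a : ℕ} (h : n ≤ a) :
    X ^ (n + 1) ∣ qPochhammer a - qPochhammer n := by
  rw [← qPochhammer_mul_prod_Ioc h, ← mul_sub_one]
  exact Dvd.dvd.mul_left (X_pow_dvd_prod_one_sub_X_pow_sub_one fun j hj => (mem_Ioc.mp hj).1) _

theorem constantCoeff_qPochhammer (n : ℕ) : constantCoeff (qPochhammer n) = 1 := by
  simp only [qPochhammer, map_prod, map_sub, map_one, map_pow, constantCoeff_X]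
  exact prod_eq_one fun j hj => by rw [zero_pow (by grind), sub_zero]

theorem qPochhammer_ne_zero (n : ℕ) : qPochhammer n ≠ 0 := fun h => by
  simpa [h] using constantCoeff_qPochhammer n

theorem exists_pentagonal_of_coeff_qPochhammer_ne_zero {n N : ℕ} (h : n ≤ N)
    (hne : coeff n (qPochhammer N) ≠ 0) : n ∈ Set.range pentagonal := by
  obtain ⟨M, hM, hNM⟩ := ((Filter.tendsto_finset_range.eventually
    (coeff_prod_one_sub_X_pow_eventually_eq ℤ n)).and (Filter.eventually_ge_atTop N)).exists
  rw [prod_range_one_sub_X_pow_succ] at hM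
  have hNM : coeff n (qPochhammer N) = coeff n (qPochhammer M) := by
    have h := dvd_sub (X_pow_succ_dvd_qPochhammer_sub h)
      (X_pow_succ_dvd_qPochhammer_sub (h.trans hNM))
    rw [sub_sub_sub_cancel_right] at h
    exact coeff_eq_of_X_pow_dvd_sub h
  by_contra hn
  exact hne (by rw [hNM, hM, coeff_pentagonalSeries_eq_zero ℤ hn])

noncomputable def qBinomial : ℕ → ℕ → ℤ⟦X⟧
  | _, 0 => 1
  | 0, _ + 1 => 0
  | n + 1, k + 1 => qBinomial n (k + 1) + X ^ (n - k) * qBinomial n k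

@[simp]
theorem qBinomial_zero_right (n : ℕ) : qBinomial n 0 = 1 := by
  cases n <;> rfl

theorem qBinomial_succ_succ (n k : ℕ) :
    qBinomial (n + 1) (k + 1) = qBinomial n (k + 1) + X ^ (n - k) * qBinomial n k :=
  rfl

theorem qBinomial_eq_zero_of_lt {n k : ℕ} (h : n < k) : qBinomial n k = 0 := by
  induction n generalizing k with
  | zero => obtain ⟨k, rfl⟩ := Nat.exists_eq_add_of_lt h; rfl
  | succ n ih =>
    obtain ⟨k, rfl⟩ := Nat.exists_eq_add_of_le' (Nat.one_le_of_lt h)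
    rw [qBinomial_succ_succ, ih (by omega), ih (by omega), mul_zero, add_zero]

@[simp]
theorem qBinomial_self (n : ℕ) : qBinomial n n = 1 := by
  induction n with
  | zero => rfl
  | succ n ih => rw [qBinomial_succ_succ, qBinomial_eq_zero_of_lt n.lt_succ_self, ih, Nat.sub_self,
      pow_zero, one_mul, zero_add]

theorem qBinomial_mul_qPochhammer {n k : ℕ} (h : k ≤ n) :
    qBinomial n k * qPochhammer k = ∏ j ∈ Ioc (n - k) n, (1 - X ^ j) := by
  induction n generalizing k with
  | zero => obtain rfl := Nat.le_zero.mp h; simp [qPochhammer]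
  | succ n ih =>
    rcases k with _ | k
    · simp [qPochhammer]
    obtain rfl | hlt := (Nat.succ_le_succ_iff.mp h).eq_or_lt
    · rw [qBinomial_self, one_mul, Nat.sub_self, ← qPochhammer_mul_prod_Ioc (Nat.zero_le _)]
      simp [qPochhammer]
    set P := ∏ j ∈ Ioc (n - k) n, (1 - (X : ℤ⟦X⟧) ^ j)
    have h1 : qBinomial n (k + 1) * qPochhammer (k + 1) = (1 - X ^ (n - k)) * P := by
      rw [ih (by omega), prod_Ioc_eq_mul_prod_Ioc _ (by omega : n - (k + 1) < n)]
      congr 3 <;> omega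
    have h2 : ∏ j ∈ Ioc (n + 1 - (k + 1)) (n + 1), (1 - X ^ j) = P * (1 - X ^ (n + 1)) := by
      rw [Nat.add_sub_add_right]; exact prod_Ioc_succ_top (by omega) _
    have hX : (X : ℤ⟦X⟧) ^ (n - k) * X ^ (k + 1) = X ^ (n + 1) := by
      rw [← pow_add]; congr 1; omega
    rw [h2, qBinomial_succ_succ]
    linear_combination h1 + X ^ (n - k) * (1 - X ^ (k + 1)) * ih (by omega : k ≤ n)
      + X ^ (n - k) * qBinomial n k * qPochhammer_succ k - P * hX

theorem one_sub_X_pow_mul_qBinomial_succ {n k : ℕ} (h : k < n) :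
    (1 - X ^ (k + 1)) * qBinomial n (k + 1) = (1 - X ^ (n - k)) * qBinomial n k := by
  refine mul_right_cancel₀ (qPochhammer_ne_zero k) ?_
  rw [mul_comm (1 - X ^ (k + 1)), mul_assoc, mul_comm (1 - X ^ (k + 1)), ← qPochhammer_succ,
    qBinomial_mul_qPochhammer h, mul_assoc, qBinomial_mul_qPochhammer h.le,
    prod_Ioc_eq_mul_prod_Ioc _ (by omega : n - (k + 1) < n)]
  congr 3 <;> omega

theorem qBinomial_succ_succ' (n k : ℕ) :
    qBinomial (n + 1) (k + 1) = X ^ (k + 1) * qBinomial n (k + 1) + qBinomial n k := by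
  rw [qBinomial_succ_succ]
  rcases lt_or_ge k n with h | h
  · linear_combination one_sub_X_pow_mul_qBinomial_succ h
  · rw [qBinomial_eq_zero_of_lt (by omega), Nat.sub_eq_zero_of_le h]
    ring

theorem qBinomial_add_two_add_two (n i : ℕ) :
    qBinomial (n + 2) (i + 2) = qBinomial n (i + 1) * (1 + X ^ (n + 1)) +
      X ^ (i + 2) * qBinomial n (i + 2) + X ^ (n - i) * qBinomial n i := by
  rw [qBinomial_succ_succ' (n + 1) (i + 1), qBinomial_succ_succ n (i + 1), qBinomial_succ_succ n i]
  rcases lt_or_ge i n with h | h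
  · have hX : (X : ℤ⟦X⟧) ^ (i + 2) * X ^ (n - (i + 1)) = X ^ (n + 1) := by
      rw [← pow_add]; congr 1; omega
    linear_combination qBinomial n (i + 1) * hX
  · rw [qBinomial_eq_zero_of_lt (by omega : n < i + 1),
      qBinomial_eq_zero_of_lt (by omega : n < i + 2)]
    ring

theorem qBinomial_add_two_one (n : ℕ) :
    qBinomial (n + 2) 1 = (1 + X ^ (n + 1)) + X * qBinomial n 1 := by
  rw [qBinomial_succ_succ' (n + 1) 0, qBinomial_succ_succ n 0]
  simp only [qBinomial_zero_right, Nat.sub_zero]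
  ring

/-- Up to the factor `zᵐ`, this is the finite Jacobi triple product
`∏_{j=1}^m (1 - z qʲ)(1 - z⁻¹ q^{j-1})`. -/
noncomputable def tripleProductPoly (m : ℕ) : Polynomial ℤ⟦X⟧ :=
  ∏ j ∈ range m,
    (1 - Polynomial.X * Polynomial.C (X ^ (j + 1))) * (Polynomial.X - Polynomial.C (X ^ j))

noncomputable def tripleProductCoeff (m i : ℕ) : ℤ⟦X⟧ :=
  (-1) ^ (i + m) * qBinomial (2 * m) i * X ^ triangle (i - m)

theorem tripleProductCoeff_succ_zero (m : ℕ) :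
    tripleProductCoeff (m + 1) 0 = -(X ^ m * tripleProductCoeff m 0) := by
  have h := natCast_triangle_add_one (-(m + 1 : ℤ))
  have he : triangle (-(m + 1 : ℤ)) = m + triangle (-m) := by
    rw [show -(m + 1 : ℤ) + 1 = -m by ring] at h; omega
  simp only [tripleProductCoeff, qBinomial_zero_right, Nat.cast_zero, zero_sub, Nat.cast_add,
    Nat.cast_one, he, pow_add]
  ring

theorem tripleProductCoeff_succ_one (m : ℕ) :
    tripleProductCoeff (m + 1) 1 =
      tripleProductCoeff m 0 * (1 + X ^ (2 * m + 1)) - X ^ m * tripleProductCoeff m 1 := by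
  have h := natCast_triangle_add_one (-m : ℤ)
  have hX : (X : ℤ⟦X⟧) ^ m * X ^ triangle (1 - m) = X ^ triangle (-m) * X := by
    rw [← pow_succ, ← pow_add]; congr 1
    rw [show (1 - m : ℤ) = -m + 1 by ring]; omega
  simp only [tripleProductCoeff, Nat.cast_zero, Nat.cast_one, zero_sub, Nat.cast_add,
    show (1 : ℤ) - (m + 1) = -m by ring, show 2 * (m + 1) = 2 * m + 2 by ring,
    qBinomial_add_two_one, qBinomial_zero_right]
  linear_combination (-(-1 : ℤ⟦X⟧) ^ m * qBinomial (2 * m) 1) * hX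

theorem tripleProductCoeff_succ_add_two (m i : ℕ) :
    tripleProductCoeff (m + 1) (i + 2) = tripleProductCoeff m (i + 1) * (1 + X ^ (2 * m + 1)) -
      X ^ m * tripleProductCoeff m (i + 2) - X ^ (m + 1) * tripleProductCoeff m i := by
  simp only [tripleProductCoeff, Nat.cast_add, Nat.cast_ofNat, Nat.cast_one,
    show 2 * (m + 1) = 2 * m + 2 by ring]
  set k : ℤ := i + 1 - m
  rw [show (i : ℤ) + 2 - (m + 1) = k by ring, show (i : ℤ) + 2 - m = k + 1 by ring,
    show (i : ℤ) - m = k - 1 by ring]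
  rcases le_or_gt i (2 * m) with h | h
  · have h1 := natCast_triangle_add_one k
    have h2 := natCast_triangle_add_one (k - 1)
    rw [sub_add_cancel] at h2
    have hX1 : (X : ℤ⟦X⟧) ^ m * X ^ triangle (k + 1) = X ^ triangle k * X ^ (i + 2) := by
      rw [← pow_add, ← pow_add]; congr 1; omega
    have hX2 :
        (X : ℤ⟦X⟧) ^ (m + 1) * X ^ triangle (k - 1) = X ^ triangle k * X ^ (2 * m - i) := by
      rw [← pow_add, ← pow_add]; congr 1; omega
    linear_combination
      (-(-1 : ℤ⟦X⟧) ^ (i + m) * X ^ triangle k) * qBinomial_add_two_add_two (2 * m) i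
      + (-1 : ℤ⟦X⟧) ^ (i + m) * qBinomial (2 * m) (i + 2) * hX1
      + (-1 : ℤ⟦X⟧) ^ (i + m) * qBinomial (2 * m) i * hX2
  · rw [qBinomial_eq_zero_of_lt (by omega), qBinomial_eq_zero_of_lt (by omega),
      qBinomial_eq_zero_of_lt (by omega), qBinomial_eq_zero_of_lt (by omega)]
    ring

theorem tripleProductPoly_succ (m : ℕ) :
    tripleProductPoly (m + 1) = tripleProductPoly m * Polynomial.X ^ 1 +
      Polynomial.C (X ^ (2 * m + 1)) * (tripleProductPoly m * Polynomial.X ^ 1) -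
      Polynomial.C (X ^ m) * tripleProductPoly m -
      Polynomial.C (X ^ (m + 1)) * (tripleProductPoly m * Polynomial.X ^ 2) := by
  have hC : (Polynomial.C (X ^ (2 * m + 1)) : Polynomial ℤ⟦X⟧) =
      Polynomial.C (X ^ (m + 1)) * Polynomial.C (X ^ m) := by
    rw [← Polynomial.C_mul, ← pow_add]; congr 2; ring
  rw [tripleProductPoly, prod_range_succ, ← tripleProductPoly, hC]
  ring

theorem coeff_tripleProductPoly (m i : ℕ) :
    (tripleProductPoly m).coeff i = tripleProductCoeff m i := by
  induction m generalizing i with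
  | zero =>
    rcases i with _ | i
    · simp [tripleProductPoly, tripleProductCoeff, triangle]
    · simp [tripleProductPoly, tripleProductCoeff, qBinomial_eq_zero_of_lt, Polynomial.coeff_one]
  | succ m ih =>
    simp only [tripleProductPoly_succ, Polynomial.coeff_add, Polynomial.coeff_sub,
      Polynomial.coeff_C_mul, Polynomial.coeff_mul_X_pow', ih]
    rcases i with _ | _ | i
    · simp [tripleProductCoeff_succ_zero]
    · simp only [zero_add, le_refl, if_true, tsub_self, Nat.not_ofNat_le_one, if_false, mul_zero,
        sub_zero, tripleProductCoeff_succ_one]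
      ring
    · simp only [le_add_iff_nonneg_left, zero_le, if_true, add_tsub_cancel_right,
        Nat.reduceSubDiff, tripleProductCoeff_succ_add_two]
      ring

theorem natDegree_tripleProductPoly_lt (m : ℕ) : (tripleProductPoly m).natDegree < 2 * m + 1 := by
  rw [Nat.lt_succ_iff, Polynomial.natDegree_le_iff_coeff_eq_zero]
  intro i hi
  rw [coeff_tripleProductPoly, tripleProductCoeff, qBinomial_eq_zero_of_lt (by exact_mod_cast hi),
    mul_zero, zero_mul]

theorem eval_one_derivative_tripleProductPoly (m : ℕ) :
    (Polynomial.derivative (tripleProductPoly (m + 1))).eval 1 =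
      qPochhammer (m + 1) * qPochhammer m := by
  have hfac : tripleProductPoly (m + 1) = (Polynomial.X - 1) *
      ((∏ j ∈ range (m + 1), (1 - Polynomial.X * Polynomial.C (X ^ (j + 1)))) *
        ∏ j ∈ range m, (Polynomial.X - Polynomial.C (X ^ (j + 1)))) := by
    rw [tripleProductPoly, prod_mul_distrib,
      prod_range_succ' (fun j => Polynomial.X - Polynomial.C (X ^ j))]
    simp only [pow_zero, map_one]
    ring
  rw [hfac, Polynomial.derivative_mul]
  simp [Polynomial.eval_prod, ← prod_range_one_sub_X_pow_succ]

theorem qPochhammer_mul_qPochhammer_eq_sum (m : ℕ) :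
    qPochhammer (m + 1) * qPochhammer m =
      ∑ i ∈ range (2 * m + 3), tripleProductCoeff (m + 1) i * i := by
  rw [← eval_one_derivative_tripleProductPoly, Polynomial.derivative_eval,
    Polynomial.sum_over_range' _ (by simp) _ (natDegree_tripleProductPoly_lt (m + 1))]
  simp [coeff_tripleProductPoly, show 2 * (m + 1) + 1 = 2 * m + 3 by ring]

theorem le_triangle_sub_add_min {m i : ℕ} (hi : i ≤ 2 * m) :
    m ≤ triangle (i - m) + (min (2 * m - i) i + 1) := by
  have h := two_mul_natCast_triangle (i - m)
  rcases le_total i m with him | him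
  · rw [min_eq_right (by omega)]
    nlinarith
  · rw [min_eq_left (by omega)]
    have : ((2 * m - i : ℕ) : ℤ) = 2 * m - i := by omega
    nlinarith

theorem X_pow_dvd_tripleProductCoeff_mul_qPochhammer_sub {m i : ℕ} (hi : i ≤ 2 * m) :
    X ^ m ∣ tripleProductCoeff m i * qPochhammer (2 * m) -
      (-1) ^ (i + m) * X ^ triangle (i - m) := by
  set c := min (2 * m - i) i + 1
  have hprod : qBinomial (2 * m) i * qPochhammer (2 * m) =
      (∏ j ∈ Ioc (2 * m - i) (2 * m), (1 - X ^ j)) * ∏ j ∈ Ioc i (2 * m), (1 - X ^ j) := by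
    rw [← qPochhammer_mul_prod_Ioc hi, ← mul_assoc, qBinomial_mul_qPochhammer hi]
  have hdvd : X ^ c ∣ qBinomial (2 * m) i * qPochhammer (2 * m) - 1 := by
    have h := dvd_mul_sub_mul (X_pow_dvd_prod_one_sub_X_pow_sub_one (R := ℤ) (c := c)
      (s := Ioc (2 * m - i) (2 * m)) fun j hj => by simp only [mem_Ioc] at hj; omega)
      (X_pow_dvd_prod_one_sub_X_pow_sub_one (s := Ioc i (2 * m)) fun j hj => by
        simp only [mem_Ioc] at hj; omega)
    rwa [mul_one, ← hprod] at h
  have hsplit :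
      tripleProductCoeff m i * qPochhammer (2 * m) - (-1) ^ (i + m) * X ^ triangle (i - m) =
        (-1) ^ (i + m) *
          (X ^ triangle (i - m) * (qBinomial (2 * m) i * qPochhammer (2 * m) - 1)) := by
    rw [tripleProductCoeff]; ring
  rw [hsplit]
  exact Dvd.dvd.mul_left ((pow_dvd_pow _ (le_triangle_sub_add_min hi)).trans
    (pow_add (X : ℤ⟦X⟧) _ c ▸ mul_dvd_mul_left _ hdvd)) _

theorem X_pow_dvd_qPochhammer_mul_sub_sum (m : ℕ) :
    X ^ (m + 1) ∣ qPochhammer (2 * (m + 1)) * (qPochhammer (m + 1) * qPochhammer m) -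
      ∑ i ∈ range (2 * m + 3),
        C ((-1) ^ (i + (m + 1)) * i : ℤ) * X ^ triangle (i - (m + 1)) := by
  rw [qPochhammer_mul_qPochhammer_eq_sum, mul_sum, ← sum_sub_distrib]
  refine dvd_sum fun i hi => ?_
  have h := X_pow_dvd_tripleProductCoeff_mul_qPochhammer_sub (m := m + 1) (i := i)
    (by simp only [mem_range] at hi; omega)
  convert h.mul_right (i : ℤ⟦X⟧) using 1
  simp only [map_mul, map_pow, map_neg, map_one, map_natCast]
  push_cast
  ring

theorem exists_triangle_of_coeff_qPochhammer_pow_three_ne_zero {n N : ℕ} (h : n ≤ N)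
    (hne : coeff n (qPochhammer N ^ 3) ≠ 0) : n ∈ Set.range triangle := by
  have hq : ∀ {a}, n ≤ a → X ^ (n + 1) ∣ qPochhammer a - qPochhammer n :=
    X_pow_succ_dvd_qPochhammer_sub
  have hcube : X ^ (n + 1) ∣
      qPochhammer N ^ 3 - qPochhammer (2 * (n + 1)) * (qPochhammer (n + 1) * qPochhammer n) := by
    have h1 := dvd_mul_sub_mul (hq h) (dvd_mul_sub_mul (hq h) (hq h))
    have h2 := dvd_mul_sub_mul (hq (by omega : n ≤ 2 * (n + 1)))
      (dvd_mul_sub_mul (hq n.le_succ) (hq le_rfl))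
    convert dvd_sub h1 h2 using 1
    ring
  have hsum := dvd_add hcube (X_pow_dvd_qPochhammer_mul_sub_sum n)
  rw [sub_add_sub_cancel] at hsum
  have hcoeff := coeff_eq_of_X_pow_dvd_sub hsum
  by_contra hn
  refine hne (hcoeff.trans (map_sum _ _ _ |>.trans (sum_eq_zero fun i _ => ?_)))
  rw [coeff_C_mul_X_pow, if_neg fun h => hn ⟨_, h.symm⟩]

theorem coeff_qPochhammer_pow_four_eq_zero {n N : ℕ} (h : n ≤ N)
    (hn : ∀ j k, pentagonal j + triangle k ≠ n) : coeff n (qPochhammer N ^ 4) = 0 := by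
  rw [pow_succ', coeff_mul]
  refine sum_eq_zero fun x hx => ?_
  rw [HasAntidiagonal.mem_antidiagonal] at hx
  by_contra hne
  obtain ⟨j, hj⟩ :=
    exists_pentagonal_of_coeff_qPochhammer_ne_zero (by omega) (left_ne_zero_of_mul hne)
  obtain ⟨k, hk⟩ :=
    exists_triangle_of_coeff_qPochhammer_pow_three_ne_zero (by omega) (right_ne_zero_of_mul hne)
  exact hn j k (by rw [hj, hk, hx])

theorem pentagonal_add_triangle_ne (n : ℕ) (j k : ℤ) :
    pentagonal j + triangle k ≠ 121 * n + 9 := by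
  intro h
  have hsum : (6 * j - 1) ^ 2 + 3 * (2 * k + 1) ^ 2 = 11 * (264 * n + 20) := by
    have h' : (pentagonal j : ℤ) + triangle k = 121 * n + 9 := by exact_mod_cast h
    linear_combination -12 * two_mul_natCast_pentagonal j - 12 * two_mul_natCast_triangle k
      + 24 * h'
  -- `-3` is not a square modulo `11`
  have hmod11 : ∀ a b : ZMod 11, a ^ 2 + 3 * b ^ 2 = 0 → a = 0 ∧ b = 0 := by decide
  obtain ⟨ha, hb⟩ := hmod11 ((6 * j - 1 : ℤ) : ZMod 11) ((2 * k + 1 : ℤ) : ZMod 11) (by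
    have := congrArg (Int.cast : ℤ → ZMod 11) hsum
    push_cast at this ⊢
    rw [this, show (11 : ZMod 11) = 0 from rfl, zero_mul])
  obtain ⟨a, ha⟩ := (ZMod.intCast_zmod_eq_zero_iff_dvd _ 11).mp ha
  obtain ⟨b, hb⟩ := (ZMod.intCast_zmod_eq_zero_iff_dvd _ 11).mp hb
  have : (121 : ℤ) ∣ 220 := ⟨a ^ 2 + 3 * b ^ 2 - 24 * n, by
    push_cast at ha hb
    linear_combination (-hsum) + (6 * j - 1 + 11 * a) * ha + 3 * (2 * k + 1 + 11 * b) * hb⟩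
  norm_num at this

theorem map_prod_one_sub_X_pow_mul_eq_pow (p : ℕ) [Fact p.Prime] (N : ℕ) :
    PowerSeries.map (Int.castRingHom (ZMod p)) (∏ t ∈ Icc 1 N, (1 - X ^ (p * t))) =
      PowerSeries.map (Int.castRingHom (ZMod p)) (qPochhammer N) ^ p := by
  have : CharP (ZMod p)⟦X⟧ p := charP_of_injective_algebraMap' (ZMod p) p
  simp only [qPochhammer, map_prod, ← prod_pow, map_sub, map_one, map_pow, map_X, sub_pow_char,
    one_pow, pow_mul']

theorem map_prod_one_sub_X_pow_mul_invOfUnit (p : ℕ) [Fact p.Prime] (N : ℕ) :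
    PowerSeries.map (Int.castRingHom (ZMod p))
        ((∏ t ∈ Icc 1 N, (1 - X ^ (p * t))) * invOfUnit (qPochhammer N) 1) =
      PowerSeries.map (Int.castRingHom (ZMod p)) (qPochhammer N ^ (p - 1)) := by
  have hunit : qPochhammer N * invOfUnit (qPochhammer N) 1 = 1 :=
    mul_invOfUnit _ _ (by rw [constantCoeff_qPochhammer, Units.val_one])
  rw [map_mul, map_prod_one_sub_X_pow_mul_eq_pow, ← pow_sub_one_mul (Fact.out : p.Prime).ne_zero,
    mul_assoc, ← map_mul, hunit, map_one, mul_one, map_pow]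

end QSeries

/-- With `d` the coefficients of `∏_{t≥1}(1-q^{5 t})/(1-q^t)` (each coefficient computed
from sufficiently long truncations in `ℤ⟦X⟧`), we have `d(121 n + 9) ≡ 0 (mod 5)`. -/
theorem stmt9 (d : ℕ → ℤ)
    (hd : ∀ N : ℕ, d N =
      PowerSeries.coeff (R := ℤ) N
        ((∏ t ∈ Finset.Icc 1 N, (1 - (PowerSeries.X : PowerSeries ℤ) ^ (5 * t))) *
          PowerSeries.invOfUnit
            (∏ t ∈ Finset.Icc 1 N, (1 - (PowerSeries.X : PowerSeries ℤ) ^ t)) 1)) :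
    ∀ n : ℕ, (5 : ℤ) ∣ d (121 * n + 9) := by
  intro n
  have : Fact (Nat.Prime 5) := ⟨Nat.prime_five⟩
  have h := congrArg (coeff (121 * n + 9))
    (QSeries.map_prod_one_sub_X_pow_mul_invOfUnit 5 (121 * n + 9))
  rw [coeff_map, coeff_map, QSeries.coeff_qPochhammer_pow_four_eq_zero le_rfl
    (QSeries.pentagonal_add_triangle_ne n), map_zero] at h
  exact (ZMod.intCast_zmod_eq_zero_iff_dvd _ 5).mp (by rw [hd]; exact h)
end
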